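/- arXiv:2408.14278 — 2 statements merged into one kernel-verified Lean document; each statement's English description precedes it below -/
import Mathlib

section
/- Suppose (μ_j)_{j≥1} is a nondecreasing sequence of positive reals satisfying the Weyl-type bounds C₁ j^{2/d} ≤ μ_j ≤ C₂ j^{2/d} for all j ≥ 1, where d ≥ 3 and 0 < C₁ ≤ C₂. Let M be an integer with C₁ M^{2/d} > 2 C₂. Then for every k ≥ 1 there exists an integer N with k ≤ N < M k such that μ_{N+1} − μ_N ≥ C₂ k^{2/d} / ((M−1) k). -/
/-!
By the Weyl bounds and the choice of `M`, `μ (M k) - μ k ≥ C₁ M^{2/d} k^{2/d} - C₂ k^{2/d} ≥ C₂ k^{2/d}`.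
This increase telescopes over the `(M - 1) k` gaps `μ (N + 1) - μ N` with `k ≤ N < M k`, so one of
them is at least the average `C₂ k^{2/d} / ((M - 1) k)`.
-/

open Finset

theorem exists_le_sub_of_nsmul_le_sub {G : Type*} [AddCommGroup G] [LinearOrder G]
    [IsOrderedAddMonoid G] {f : ℕ → G} {a b : ℕ} (hab : a < b) {g : G}
    (h : (b - a) • g ≤ f b - f a) : ∃ N, a ≤ N ∧ N < b ∧ g ≤ f (N + 1) - f N := by
  have hsum : ∑ _i ∈ Ico a b, g ≤ ∑ i ∈ Ico a b, (f (i + 1) - f i) := by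
    rwa [sum_const, Nat.card_Ico, sum_Ico_sub f hab.le]
  obtain ⟨N, hN, hgap⟩ := exists_le_of_sum_le (nonempty_Ico.mpr hab) hsum
  exact ⟨N, (mem_Ico.mp hN).1, (mem_Ico.mp hN).2, hgap⟩

theorem two_le_of_two_mul_lt_mul_rpow {C₁ C₂ α : ℝ} {M : ℕ} (hC₁ : 0 < C₁) (hC : C₁ ≤ C₂)
    (hM : 2 * C₂ < C₁ * (M : ℝ) ^ α) : 2 ≤ M := by
  by_contra! hM2
  have hpow : (M : ℝ) ^ α ≤ 1 := by
    interval_cases M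
    · simpa using Real.zero_rpow_le_one α
    · simp
  nlinarith

theorem le_sub_of_weyl_bounds {μ : ℕ → ℝ} {C₁ C₂ α : ℝ} {M k : ℕ} (hk : 1 ≤ k)
    (hlow : C₁ * ((M * k : ℕ) : ℝ) ^ α ≤ μ (M * k)) (hupp : μ k ≤ C₂ * (k : ℝ) ^ α)
    (hM : 2 * C₂ < C₁ * (M : ℝ) ^ α) : C₂ * (k : ℝ) ^ α ≤ μ (M * k) - μ k := by
  rw [Nat.cast_mul, Real.mul_rpow M.cast_nonneg k.cast_nonneg] at hlow
  have hkpow : 0 < (k : ℝ) ^ α := Real.rpow_pos_of_pos (by exact_mod_cast hk) α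
  nlinarith [mul_lt_mul_of_pos_right hM hkpow]

theorem stmt4_general (d : ℕ) (C₁ C₂ : ℝ) (hC₁ : 0 < C₁) (hC : C₁ ≤ C₂)
    (μ : ℕ → ℝ)
    (hlow : ∀ j : ℕ, 1 ≤ j → C₁ * (j : ℝ) ^ ((2 : ℝ) / d) ≤ μ j)
    (hupp : ∀ j : ℕ, 1 ≤ j → μ j ≤ C₂ * (j : ℝ) ^ ((2 : ℝ) / d))
    (M : ℕ) (hM : 2 * C₂ < C₁ * (M : ℝ) ^ ((2 : ℝ) / d)) :
    ∀ k : ℕ, 1 ≤ k → ∃ N : ℕ, k ≤ N ∧ N < M * k ∧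
      C₂ * (k : ℝ) ^ ((2 : ℝ) / d) / (((M : ℝ) - 1) * k) ≤ μ (N + 1) - μ N := by
  intro k hk
  have hM2 : 2 ≤ M := two_le_of_two_mul_lt_mul_rpow hC₁ hC hM
  have hkMk : k < M * k := lt_mul_left hk (by omega)
  have hincrease := le_sub_of_weyl_bounds hk (hlow (M * k) (by nlinarith)) (hupp k hk) hM
  refine exists_le_sub_of_nsmul_le_sub hkMk (le_of_eq_of_le ?_ hincrease)
  have hgaps : ((M * k - k : ℕ) : ℝ) = ((M : ℝ) - 1) * k := by
    push_cast [hkMk.le]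
    ring
  have hpos : ((M : ℝ) - 1) * k ≠ 0 := by
    have hM2' : (2 : ℝ) ≤ M := by exact_mod_cast hM2
    have hk' : (1 : ℝ) ≤ k := by exact_mod_cast hk
    exact (mul_pos (by linarith) (by linarith)).ne'
  rw [nsmul_eq_mul, hgaps, mul_div_cancel₀ _ hpos]

/-- Pigeonhole argument producing a large spectral gap from Weyl-type bounds. -/
theorem stmt4 (d : ℕ) (hd : 3 ≤ d) (C₁ C₂ : ℝ) (hC₁ : 0 < C₁) (hC : C₁ ≤ C₂)
    (μ : ℕ → ℝ) (hmono : Monotone μ) (hpos : ∀ j, 1 ≤ j → 0 < μ j)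
    (hlow : ∀ j : ℕ, 1 ≤ j → C₁ * (j : ℝ) ^ ((2 : ℝ) / d) ≤ μ j)
    (hupp : ∀ j : ℕ, 1 ≤ j → μ j ≤ C₂ * (j : ℝ) ^ ((2 : ℝ) / d))
    (M : ℕ) (hM : 2 * C₂ < C₁ * (M : ℝ) ^ ((2 : ℝ) / d)) :
    ∀ k : ℕ, 1 ≤ k → ∃ N : ℕ, k ≤ N ∧ N < M * k ∧
      C₂ * (k : ℝ) ^ ((2 : ℝ) / d) / (((M : ℝ) - 1) * k) ≤ μ (N + 1) - μ N :=
  stmt4_general d C₁ C₂ hC₁ hC μ hlow hupp M hM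
end

section
/- Let T and T̃ be compact self-adjoint positive operators on a Hilbert space H, with k-th largest eigenvalues 1/μ_k and 1/μ̃_k respectively (counted with multiplicity). Let S_k be the span of the top-k eigenvectors of T. If |⟨(T − T̃)v, v⟩| ≤ δ ‖v‖² for all v ∈ S_k, then 1/μ_k ≤ δ + 1/μ̃_k. -/
/-!
A dimension count gives a nonzero `v ∈ S_k` orthogonal to the first `k` eigenvectors of `T̃`.
Expanding in the two eigenbases, `⟪T v, v⟫ ≥ ‖v‖² / μ_k` because `v` only has components
along eigenvalues `≥ 1/μ_k`, and `⟪T̃ v, v⟫ ≤ ‖v‖² / μ̃_k` because it only has components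
along eigenvalues `≤ 1/μ̃_k`. Hence `‖v‖² / μ_k ≤ ⟪(T - T̃) v, v⟫ + ⟪T̃ v, v⟫ ≤ (δ + 1/μ̃_k) ‖v‖²`.
-/

open scoped RealInnerProductSpace

open Module Submodule

section
variable {𝕜 E ι : Type*} [RCLike 𝕜] [NormedAddCommGroup E] [InnerProductSpace 𝕜 E]

theorem Orthonormal.inner_eq_zero_of_mem_span_image {v : ι → E} (hv : Orthonormal 𝕜 v)
    {s : Set ι} {i : ι} (hi : i ∉ s) {x : E} (hx : x ∈ span 𝕜 (v '' s)) :
    inner 𝕜 (v i) x = 0 := by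
  obtain ⟨l, hl, rfl⟩ := (Finsupp.mem_span_image_iff_linearCombination 𝕜).mp hx
  rw [← inner_conj_symm, hv.inner_finsupp_eq_zero hi hl, map_zero]

theorem LinearIndependent.finrank_span_image_finset {v : ι → E} (hv : LinearIndependent 𝕜 v)
    (s : Finset ι) : finrank 𝕜 (span 𝕜 (v '' s)) = s.card := by
  rw [Set.image_eq_range]
  exact (finrank_span_eq_card (hv.comp _ Subtype.val_injective)).trans (by simp)

theorem Submodule.exists_ne_zero_forall_inner_eq_zero (S : Submodule 𝕜 E)
    [FiniteDimensional 𝕜 S] {n : ℕ} (f : Fin n → E) (hn : n < finrank 𝕜 S) :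
    ∃ x ∈ S, x ≠ 0 ∧ ∀ i, inner 𝕜 (f i) x = 0 := by
  let L : S →ₗ[𝕜] Fin n → 𝕜 :=
    LinearMap.pi fun i => (innerSL 𝕜 (f i) : E →L[𝕜] 𝕜).toLinearMap ∘ₗ S.subtype
  obtain ⟨x, hx, hx0⟩ := exists_mem_ne_zero_of_ne_bot (L.ker_ne_bot_of_finrank_lt (by simpa))
  exact ⟨x, x.2, by simpa using hx0, fun i => congrFun (LinearMap.mem_ker.mp hx) i⟩

end

namespace HilbertBasis

variable {ι H : Type*} [NormedAddCommGroup H] [InnerProductSpace ℝ H]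
  (B : HilbertBasis ι ℝ H)

theorem hasSum_sq_inner (v : H) : HasSum (fun i => ⟪B i, v⟫ ^ 2) (‖v‖ ^ 2) := by
  rw [← real_inner_self_eq_norm_sq]
  exact (B.hasSum_inner_mul_inner v v).congr_fun fun i => by rw [real_inner_comm v, sq]

variable {A : H →ₗ[ℝ] H} (hA : A.IsSymmetric) {ν : ι → ℝ}
  (hAB : ∀ i, A (B i) = ν i • B i)
include hA hAB

theorem hasSum_inner_map_self (v : H) :
    HasSum (fun i => ν i * ⟪B i, v⟫ ^ 2) ⟪A v, v⟫ := by
  refine (B.hasSum_inner_mul_inner (A v) v).congr_fun fun i => ?_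
  rw [hA, hAB, real_inner_smul_right, real_inner_comm v]
  ring

theorem mul_norm_sq_le_inner_map_self {v : H} {c : ℝ} (hc : ∀ i, ⟪B i, v⟫ ≠ 0 → c ≤ ν i) :
    c * ‖v‖ ^ 2 ≤ ⟪A v, v⟫ := by
  refine hasSum_le (fun i => ?_) ((B.hasSum_sq_inner v).mul_left c)
    (B.hasSum_inner_map_self hA hAB v)
  by_cases hi : ⟪B i, v⟫ = 0
  · simp [hi]
  · exact mul_le_mul_of_nonneg_right (hc i hi) (sq_nonneg _)

theorem inner_map_self_le_mul_norm_sq {v : H} {c : ℝ} (hc : ∀ i, ⟪B i, v⟫ ≠ 0 → ν i ≤ c) :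
    ⟪A v, v⟫ ≤ c * ‖v‖ ^ 2 := by
  refine hasSum_le (fun i => ?_) (B.hasSum_inner_map_self hA hAB v)
    ((B.hasSum_sq_inner v).mul_left c)
  by_cases hi : ⟪B i, v⟫ = 0
  · simp [hi]
  · exact mul_le_mul_of_nonneg_right (hc i hi) (sq_nonneg _)

end HilbertBasis

theorem stmt10_general {H : Type*} [NormedAddCommGroup H] [InnerProductSpace ℝ H]
    [CompleteSpace H]
    (T T' : H →L[ℝ] H)
    (hTsa : IsSelfAdjoint T)
    (hT'sa : IsSelfAdjoint T')
    (e e' : ℕ → H) (he : Orthonormal ℝ e) (he' : Orthonormal ℝ e')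
    (hspan : (Submodule.span ℝ (Set.range e)).topologicalClosure = ⊤)
    (hspan' : (Submodule.span ℝ (Set.range e')).topologicalClosure = ⊤)
    (μ μ' : ℕ → ℝ) (hμpos : ∀ j, 0 < μ j) (hμ'pos : ∀ j, 0 < μ' j)
    (hμmono : Monotone μ) (hμ'mono : Monotone μ')
    (heig : ∀ j, T (e j) = (1 / μ j) • e j)
    (heig' : ∀ j, T' (e' j) = (1 / μ' j) • e' j)
    (k : ℕ) (δ : ℝ)
    (hclose : ∀ v ∈ Submodule.span ℝ (e '' Set.Iic k), |⟪(T - T') v, v⟫| ≤ δ * ‖v‖ ^ 2) :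
    1 / μ k ≤ δ + 1 / μ' k := by
  set S := span ℝ (e '' Set.Iic k)
  have : FiniteDimensional ℝ S := .span_of_finite ℝ ((Set.finite_Iic k).image e)
  have hdim : finrank ℝ S = k + 1 := by
    rw [← Nat.card_Iic, ← he.linearIndependent.finrank_span_image_finset, Finset.coe_Iic]
  obtain ⟨v, hvS, hv0, hv'⟩ :=
    S.exists_ne_zero_forall_inner_eq_zero (fun i : Fin k => e' i) (by omega)
  have hlow : 1 / μ k * ‖v‖ ^ 2 ≤ ⟪T v, v⟫ := by
    refine (HilbertBasis.mk he hspan.ge).mul_norm_sq_le_inner_map_self hTsa.isSymmetric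
      (by simpa using heig) fun j hj => one_div_le_one_div_of_le (hμpos j) (hμmono ?_)
    by_contra hjk
    exact hj (by simpa using he.inner_eq_zero_of_mem_span_image (by simpa using hjk) hvS)
  have hup : ⟪T' v, v⟫ ≤ 1 / μ' k * ‖v‖ ^ 2 := by
    refine (HilbertBasis.mk he' hspan'.ge).inner_map_self_le_mul_norm_sq hT'sa.isSymmetric
      (by simpa using heig') fun j hj => one_div_le_one_div_of_le (hμ'pos k) (hμ'mono ?_)
    by_contra hjk
    exact hj (by simpa using hv' ⟨j, by omega⟩)
  have hdiff : ⟪(T - T') v, v⟫ ≤ δ * ‖v‖ ^ 2 := (le_abs_self _).trans (hclose v hvS)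
  refine le_of_mul_le_mul_right ?_ (by positivity : 0 < ‖v‖ ^ 2)
  calc 1 / μ k * ‖v‖ ^ 2 ≤ ⟪T v, v⟫ := hlow
    _ = ⟪(T - T') v, v⟫ + ⟪T' v, v⟫ := by simp [inner_sub_left]
    _ ≤ (δ + 1 / μ' k) * ‖v‖ ^ 2 := by linarith

/-- Comparison of eigenvalues of two compact self-adjoint positive operators whose
quadratic forms are `δ`-close on the span `S_k` of the top-(k+1) eigenvectors of the
first operator: `1/μ_k ≤ δ + 1/μ̃_k`. -/
theorem stmt10 {H : Type*} [NormedAddCommGroup H] [InnerProductSpace ℝ H]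
    [CompleteSpace H]
    (T T' : H →L[ℝ] H)
    (hTc : IsCompactOperator ⇑T) (hTsa : IsSelfAdjoint T)
    (hT'c : IsCompactOperator ⇑T') (hT'sa : IsSelfAdjoint T')
    (hTpos : ∀ x : H, 0 ≤ ⟪T x, x⟫) (hT'pos : ∀ x : H, 0 ≤ ⟪T' x, x⟫)
    (e e' : ℕ → H) (he : Orthonormal ℝ e) (he' : Orthonormal ℝ e')
    (hspan : (Submodule.span ℝ (Set.range e)).topologicalClosure = ⊤)
    (hspan' : (Submodule.span ℝ (Set.range e')).topologicalClosure = ⊤)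
    (μ μ' : ℕ → ℝ) (hμpos : ∀ j, 0 < μ j) (hμ'pos : ∀ j, 0 < μ' j)
    (hμmono : Monotone μ) (hμ'mono : Monotone μ')
    (heig : ∀ j, T (e j) = (1 / μ j) • e j)
    (heig' : ∀ j, T' (e' j) = (1 / μ' j) • e' j)
    (k : ℕ) (δ : ℝ) (hδ : 0 ≤ δ)
    (hclose : ∀ v ∈ Submodule.span ℝ (e '' Set.Iic k), |⟪(T - T') v, v⟫| ≤ δ * ‖v‖ ^ 2) :
    1 / μ k ≤ δ + 1 / μ' k :=
  stmt10_general T T' hTsa hT'sa e e' he he' hspan hspan' μ μ' hμpos hμ'pos hμmono hμ'mono heig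
    heig' k δ hclose
end
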